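/- Let A be an invertible N×N matrix over ℂ, b ∈ ℂ^N, and let g be the degree of the minimal polynomial of b with respect to A. Then the solution x = A⁻¹b of the linear system Ax = b belongs to the Krylov subspace K_g(A, b). -/

import Mathlib

/-!
Write `p = X * q + C c` with `q = p.divX`. If `c = 0`, then `A (q(A) b) = p(A) b = 0`, so
`q(A) b = 0` by invertibility, and `q` would be a monic annihilator of degree `g - 1`. Hence
`c ≠ 0`, and `A q(A) b = -c b` gives `A⁻¹ b = -c⁻¹ q(A) b ∈ span {b, …, A^(g-2) b}`.
-/

open Matrix Polynomial

/-- The n-th Krylov subspace K_n(A, b) = span{b, Ab, A²b, …, A^{n−1}b}. -/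
noncomputable def krylov {N : ℕ} (A : Matrix (Fin N) (Fin N) ℂ) (b : Fin N → ℂ) (n : ℕ) :
    Submodule ℂ (Fin N → ℂ) :=
  Submodule.span ℂ {v | ∃ i < n, v = (A ^ i) *ᵥ b}

lemma aeval_mulVec_mem_krylov {N n : ℕ} (A : Matrix (Fin N) (Fin N) ℂ) (b : Fin N → ℂ)
    {q : ℂ[X]} (hq : q.degree < n) : aeval A q *ᵥ b ∈ krylov A b n := by
  rw [aeval_eq_sum_range, sum_mulVec]
  refine Submodule.sum_mem _ fun i _ => ?_
  by_cases hi : q.coeff i = 0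
  · simp [hi]
  rw [smul_mulVec]
  refine Submodule.smul_mem _ _ (Submodule.subset_span ⟨i, ?_, rfl⟩)
  exact_mod_cast (le_degree_of_ne_zero hi).trans_lt hq

lemma Polynomial.monic_divX_of_coeff_zero {R : Type*} [CommRing R] {p : R[X]} (hp : p.Monic)
    (h0 : p.coeff 0 = 0) : p.divX.Monic := by
  have hX : X * p.divX = p := by simpa [h0] using X_mul_divX_add p
  exact monic_X.of_mul_monic_left (hX.symm ▸ hp)

namespace Matrix

variable {n R : Type*} [Fintype n] [DecidableEq n] [CommRing R]

lemma mul_aeval_divX_add_coeff_zero (A : Matrix n n R) (p : R[X]) :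
    A * aeval A p.divX + p.coeff 0 • 1 = aeval A p := by
  conv_rhs => rw [← X_mul_divX_add p]
  rw [map_add, map_mul, aeval_X, aeval_C, Algebra.algebraMap_eq_smul_one]

lemma mulVec_aeval_divX_mulVec {A : Matrix n n R} {b : n → R} {p : R[X]}
    (hp : aeval A p *ᵥ b = 0) : A *ᵥ (aeval A p.divX *ᵥ b) = -p.coeff 0 • b := by
  have := congrArg (· *ᵥ b) (mul_aeval_divX_add_coeff_zero A p)
  simp only [add_mulVec, smul_mulVec, one_mulVec, hp, ← mulVec_mulVec] at this
  rw [neg_smul, eq_neg_iff_add_eq_zero, this]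

lemma aeval_divX_mulVec_eq_zero {A : Matrix n n R} {b : n → R} (hA : Function.Injective A.mulVec)
    {p : R[X]} (h0 : p.coeff 0 = 0) (hp : aeval A p *ᵥ b = 0) : aeval A p.divX *ᵥ b = 0 :=
  hA <| by rw [mulVec_aeval_divX_mulVec hp, h0, neg_zero, zero_smul, mulVec_zero]

lemma coeff_zero_ne_zero_of_minimal [Nontrivial R] {A : Matrix n n R} {b : n → R}
    (hA : Function.Injective A.mulVec) {p : R[X]} (hp : p.Monic) (hann : aeval A p *ᵥ b = 0)
    (hmin : ∀ q : R[X], q.Monic → aeval A q *ᵥ b = 0 → p.natDegree ≤ q.natDegree) :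
    p.coeff 0 ≠ 0 := by
  intro h0
  have hle := hmin _ (monic_divX_of_coeff_zero hp h0) (aeval_divX_mulVec_eq_zero hA h0 hann)
  have hpos : p.natDegree ≠ 0 := fun hdeg => by simp [hp.natDegree_eq_zero.mp hdeg] at h0
  rw [natDegree_divX_eq_natDegree_tsub_one] at hle
  omega

lemma inv_mulVec_eq_smul_aeval_divX_mulVec {K : Type*} [Field K] {A : Matrix n n K} {b : n → K}
    (hA : IsUnit A.det) {p : K[X]} (hann : aeval A p *ᵥ b = 0) (h0 : p.coeff 0 ≠ 0) :
    A⁻¹ *ᵥ b = -(p.coeff 0)⁻¹ • (aeval A p.divX *ᵥ b) := by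
  calc A⁻¹ *ᵥ b = -(p.coeff 0)⁻¹ • -p.coeff 0 • (A⁻¹ *ᵥ b) := by
        rw [smul_smul, neg_mul_neg, inv_mul_cancel₀ h0, one_smul]
    _ = -(p.coeff 0)⁻¹ • (A⁻¹ *ᵥ (A *ᵥ (aeval A p.divX *ᵥ b))) := by
        rw [mulVec_aeval_divX_mulVec hann, mulVec_smul]
    _ = -(p.coeff 0)⁻¹ • (aeval A p.divX *ᵥ b) := by
        rw [mulVec_mulVec, nonsing_inv_mul A hA, one_mulVec]

end Matrix

/-- For an invertible matrix A and g the degree of the minimal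
polynomial of b with respect to A, the solution x = A⁻¹b of Ax = b belongs to
K_g(A, b). -/
theorem solution_mem_krylov_g
    {N : ℕ} (A : Matrix (Fin N) (Fin N) ℂ) (hA : IsUnit A.det) (b : Fin N → ℂ)
    (p : Polynomial ℂ) (hmonic : p.Monic)
    (hann : (Polynomial.aeval A p) *ᵥ b = 0)
    (hmin : ∀ q : Polynomial ℂ, q.Monic → (Polynomial.aeval A q) *ᵥ b = 0 →
      p.natDegree ≤ q.natDegree)
    (g : ℕ) (hg : g = p.natDegree) :
    A⁻¹ *ᵥ b ∈ krylov A b g := by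
  have hAinj : Function.Injective A.mulVec :=
    mulVec_injective_iff_isUnit.2 ((isUnit_iff_isUnit_det A).2 hA)
  rw [inv_mulVec_eq_smul_aeval_divX_mulVec hA hann
    (coeff_zero_ne_zero_of_minimal hAinj hmonic hann hmin)]
  refine Submodule.smul_mem _ _ (aeval_mulVec_mem_krylov A b ?_)
  rw [hg, ← degree_eq_natDegree hmonic.ne_zero]
  exact degree_divX_lt hmonic.ne_zero
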